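/- arXiv:1205.5231 — 2 statements merged into one kernel-verified Lean document; each statement's English description precedes it below -/
import Mathlib

section
/- Let ρ be a subnormalized density operator (ρ ≥ 0, tr ρ ≤ 1) on a finite-dimensional Hilbert space and Π an orthogonal projector with orthogonal complement Π^⊥ = I - Π. Then the purified distance satisfies P(ΠρΠ, ρ) ≤ √(2 tr[Π^⊥ ρ] - (tr[Π^⊥ ρ])²). -/
open Matrix Kronecker ComplexOrder

noncomputable section


open scoped Classical
namespace QIT

/-- Square root of a positive semidefinite matrix (junk value `0` otherwise). -/
noncomputable def msqrt {n : Type*} [Fintype n] [DecidableEq n] (A : Matrix n n ℂ) :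
    Matrix n n ℂ :=
  if h : A.PosSemidef then
    (h.1.eigenvectorUnitary : Matrix n n ℂ) * diagonal ((↑) ∘ Real.sqrt ∘ h.1.eigenvalues) *
      (star h.1.eigenvectorUnitary : Matrix n n ℂ)
  else 0

/-- Trace norm `‖A‖₁ = tr √(Aᴴ A)`. -/
noncomputable def traceNorm {n : Type*} [Fintype n] [DecidableEq n] (A : Matrix n n ℂ) : ℝ :=
  ((msqrt (Aᴴ * A)).trace).re

/-- Fidelity `F(ρ,σ) = ‖√ρ √σ‖₁`. -/
noncomputable def fidelity {n : Type*} [Fintype n] [DecidableEq n] (ρ σ : Matrix n n ℂ) : ℝ :=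
  traceNorm (msqrt ρ * msqrt σ)

/-- Generalized fidelity. -/
noncomputable def gFid {n : Type*} [Fintype n] [DecidableEq n] (ρ σ : Matrix n n ℂ) : ℝ :=
  fidelity ρ σ + Real.sqrt ((1 - ρ.trace.re) * (1 - σ.trace.re))

/-- Purified distance. -/
noncomputable def pDist {n : Type*} [Fintype n] [DecidableEq n] (ρ σ : Matrix n n ℂ) : ℝ :=
  Real.sqrt (1 - (gFid ρ σ) ^ 2)

/-- Subnormalized density operator. -/
def SubNormalized {n : Type*} [Fintype n] (ρ : Matrix n n ℂ) : Prop :=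
  ρ.PosSemidef ∧ ρ.trace.re ≤ 1

/-- Loewner order `A ≤ B`. -/
def mLE {n : Type*} [Fintype n] (A B : Matrix n n ℂ) : Prop := (B - A).PosSemidef

/-- Functional calculus for Hermitian matrices (junk value `0` otherwise). -/
noncomputable def cfcHerm {n : Type*} [Fintype n] [DecidableEq n] (A : Matrix n n ℂ)
    (f : ℝ → ℝ) : Matrix n n ℂ :=
  if hA : A.IsHermitian then
    (hA.eigenvectorUnitary : Matrix n n ℂ) *
      Matrix.diagonal (fun i => (f (hA.eigenvalues i) : ℂ)) *
      (star ((hA.eigenvectorUnitary : Matrix n n ℂ)))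
  else 0

/-- Projector onto the strictly negative eigenspaces of a Hermitian matrix. -/
noncomputable def negProj {n : Type*} [Fintype n] [DecidableEq n] (A : Matrix n n ℂ) :
    Matrix n n ℂ :=
  cfcHerm A (fun x => if x < 0 then 1 else 0)

/-- Projector onto the nonnegative eigenspaces of a Hermitian matrix. -/
noncomputable def posProj {n : Type*} [Fintype n] [DecidableEq n] (A : Matrix n n ℂ) :
    Matrix n n ℂ :=
  cfcHerm A (fun x => if 0 ≤ x then 1 else 0)

/-- Partial trace over the second (right) factor. -/
noncomputable def ptraceRight {a b : Type*} [Fintype a] [Fintype b]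
    (M : Matrix (a × b) (a × b) ℂ) : Matrix a a ℂ :=
  Matrix.of fun i j => ∑ k, M (i, k) (j, k)

/-- Partial trace over the first (left) factor. -/
noncomputable def ptraceLeft {a b : Type*} [Fintype a] [Fintype b]
    (M : Matrix (a × b) (a × b) ℂ) : Matrix b b ℂ :=
  Matrix.of fun i j => ∑ k, M (k, i) (k, j)

/-- Conditional min-entropy `H_min(A|B)_ρ`, conditioning on the second factor. -/
noncomputable def Hmin {a b : Type*} [Fintype a] [Fintype b] [DecidableEq a] [DecidableEq b]
    (ρ : Matrix (a × b) (a × b) ℂ) : ℝ :=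
  sSup {l : ℝ | ∃ σ : Matrix b b ℂ, SubNormalized σ ∧
    mLE ρ ((((2 : ℝ) ^ (-l) : ℝ)) • ((1 : Matrix a a ℂ) ⊗ₖ σ))}

/-- Relative conditional max-entropy `H_max(A|B)_{ρ|σ}`. -/
noncomputable def HmaxRel {a b : Type*} [Fintype a] [Fintype b] [DecidableEq a] [DecidableEq b]
    (ρ : Matrix (a × b) (a × b) ℂ) (σ : Matrix b b ℂ) : ℝ :=
  Real.logb 2 ((fidelity ρ ((1 : Matrix a a ℂ) ⊗ₖ σ)) ^ 2)

/-- Conditional max-entropy `H_max(A|B)_ρ`. -/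
noncomputable def Hmax {a b : Type*} [Fintype a] [Fintype b] [DecidableEq a] [DecidableEq b]
    (ρ : Matrix (a × b) (a × b) ℂ) : ℝ :=
  sSup {x : ℝ | ∃ σ : Matrix b b ℂ, SubNormalized σ ∧ x = HmaxRel ρ σ}

/-- Smooth conditional min-entropy. -/
noncomputable def sHmin {a b : Type*} [Fintype a] [Fintype b] [DecidableEq a] [DecidableEq b]
    (ε : ℝ) (ρ : Matrix (a × b) (a × b) ℂ) : ℝ :=
  sSup {x : ℝ | ∃ ρ' : Matrix (a × b) (a × b) ℂ,
    SubNormalized ρ' ∧ pDist ρ' ρ ≤ ε ∧ x = Hmin ρ'}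

/-- Smooth conditional max-entropy. -/
noncomputable def sHmax {a b : Type*} [Fintype a] [Fintype b] [DecidableEq a] [DecidableEq b]
    (ε : ℝ) (ρ : Matrix (a × b) (a × b) ℂ) : ℝ :=
  sInf {x : ℝ | ∃ ρ' : Matrix (a × b) (a × b) ℂ,
    SubNormalized ρ' ∧ pDist ρ' ρ ≤ ε ∧ x = Hmax ρ'}

/-- Operator norm of a Hermitian (in particular PSD) matrix: largest eigenvalue. -/
noncomputable def opNormPSD {n : Type*} [Fintype n] [DecidableEq n] (A : Matrix n n ℂ) : ℝ :=
  if hA : A.IsHermitian then ⨆ i, hA.eigenvalues i else 0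

end QIT

/-!
With `√` the positive square root, `(√(ΠρΠ) √ρ)ᴴ (√(ΠρΠ) √ρ) = √ρ ΠρΠ √ρ = (√ρ Π √ρ)²`, so
the fidelity of `ΠρΠ` and `ρ` is exactly `tr(√ρ Π √ρ) = tr(Πρ) =: p`. With `s = tr ρ` and
`ε = s - p = tr(Π^⊥ ρ) ≥ 0`, the generalized fidelity is
`p + √((1 - p)(1 - s)) ≥ p + (1 - s) = 1 - ε`, hence `P(ΠρΠ, ρ)² ≤ 1 - (1 - ε)² = 2ε - ε²`.
-/

open scoped MatrixOrder

namespace QIT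

lemma star_mul_self_eq_of_mul_self_eq {R : Type*} [Monoid R] [StarMul R] {ρ B X Y : R}
    (hX : IsSelfAdjoint X) (hY : IsSelfAdjoint Y) (hXX : X * X = B * ρ * B) (hYY : Y * Y = ρ) :
    star (X * Y) * (X * Y) = (Y * B * Y) * (Y * B * Y) := by
  rw [star_mul, hX.star_eq, hY.star_eq, mul_assoc, ← mul_assoc X, hXX, ← hYY]
  simp only [mul_assoc]

lemma one_sub_sq_add_sqrt_le {p s : ℝ} (hp : 0 ≤ p) (hps : p ≤ s) (hs : s ≤ 1) :
    1 - (p + √((1 - p) * (1 - s))) ^ 2 ≤ 2 * (s - p) - (s - p) ^ 2 := by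
  have h : 1 - s ≤ √((1 - p) * (1 - s)) := Real.le_sqrt_of_sq_le (by nlinarith)
  nlinarith

variable {n : Type*} [Fintype n] [DecidableEq n]

lemma msqrt_eq_cfcSqrt {A : Matrix n n ℂ} (hA : A.PosSemidef) : msqrt A = CFC.sqrt A := by
  rw [msqrt, dif_pos hA, CFC.sqrt_eq_cfc, cfc_nnreal_eq_real _ A, hA.1.cfc_eq]
  simp only [IsHermitian.cfc, Unitary.conjStarAlgAut_apply]
  congr 3
  funext i
  simp [Real.coe_toNNReal', max_eq_left (hA.eigenvalues_nonneg i)]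

lemma trace_cfcSqrt_mul_mul_cfcSqrt {A : Matrix n n ℂ} (hA : 0 ≤ A) (B : Matrix n n ℂ) :
    (CFC.sqrt A * B * CFC.sqrt A).trace = (B * A).trace := by
  rw [trace_mul_comm, ← mul_assoc, CFC.sqrt_mul_sqrt_self A hA, trace_mul_comm]

lemma re_trace_mul_nonneg {A B : Matrix n n ℂ} (hA : 0 ≤ A) (hB : 0 ≤ B) :
    0 ≤ (B * A).trace.re := by
  rw [← trace_cfcSqrt_mul_mul_cfcSqrt hA]
  exact (Complex.nonneg_iff.mp
    (conjugate_nonneg_of_nonneg hB (CFC.sqrt_nonneg A)).posSemidef.trace_nonneg).1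

lemma fidelity_conj_left {ρ B : Matrix n n ℂ} (hρ : 0 ≤ ρ) (hB : 0 ≤ B) :
    fidelity (B * ρ * B) ρ = (B * ρ).trace.re := by
  have hBρB : 0 ≤ B * ρ * B := conjugate_nonneg_of_nonneg hρ hB
  have habs : CFC.sqrt ((CFC.sqrt (B * ρ * B) * CFC.sqrt ρ)ᴴ *
      (CFC.sqrt (B * ρ * B) * CFC.sqrt ρ)) = CFC.sqrt ρ * B * CFC.sqrt ρ := by
    rw [← star_eq_conjTranspose, CFC.sqrt_eq_iff _ _ (star_mul_self_nonneg _)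
      (conjugate_nonneg_of_nonneg hB (CFC.sqrt_nonneg ρ))]
    exact (star_mul_self_eq_of_mul_self_eq (CFC.sqrt_nonneg _).isSelfAdjoint
      (CFC.sqrt_nonneg _).isSelfAdjoint (CFC.sqrt_mul_sqrt_self _ hBρB)
      (CFC.sqrt_mul_sqrt_self ρ hρ)).symm
  rw [fidelity, msqrt_eq_cfcSqrt hBρB.posSemidef, msqrt_eq_cfcSqrt hρ.posSemidef, traceNorm,
    msqrt_eq_cfcSqrt (posSemidef_conjTranspose_mul_self _), habs,
    trace_cfcSqrt_mul_mul_cfcSqrt hρ]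

lemma gFid_conj_left_of_isStarProjection {ρ P : Matrix n n ℂ} (hρ : 0 ≤ ρ)
    (hP : IsStarProjection P) :
    gFid (P * ρ * P) ρ =
      (P * ρ).trace.re + √((1 - (P * ρ).trace.re) * (1 - ρ.trace.re)) := by
  have htrace : (P * ρ * P).trace = (P * ρ).trace := by
    rw [trace_mul_comm, ← mul_assoc, hP.isIdempotentElem.eq]
  rw [gFid, fidelity_conj_left hρ hP.nonneg, htrace]

end QIT

open QIT in
/-- `P(ΠρΠ, ρ) ≤ √(2 tr[Π^⊥ ρ] - (tr[Π^⊥ ρ])²)` for a projector `Π`. -/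
theorem stmt3 {n : Type*} [Fintype n] [DecidableEq n] (ρ P : Matrix n n ℂ)
    (hρ : SubNormalized ρ) (hP : P.IsHermitian) (hproj : P * P = P) :
    pDist (P * ρ * P) ρ ≤
      Real.sqrt (2 * ((((1 - P) * ρ).trace).re) - ((((1 - P) * ρ).trace).re) ^ 2) := by
  have hPproj : IsStarProjection P := ⟨hproj, hP⟩
  have hρ₀ : 0 ≤ ρ := hρ.1.nonneg
  have hcompl : ((1 - P) * ρ).trace.re = ρ.trace.re - (P * ρ).trace.re := by
    rw [sub_mul, one_mul, trace_sub, Complex.sub_re]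
  have hPρ_le : (P * ρ).trace.re ≤ ρ.trace.re :=
    sub_nonneg.mp (hcompl ▸ re_trace_mul_nonneg hρ₀ hPproj.one_sub.nonneg)
  rw [pDist, gFid_conj_left_of_isStarProjection hρ₀ hPproj, hcompl]
  exact Real.sqrt_le_sqrt <|
    one_sub_sq_add_sqrt_le (re_trace_mul_nonneg hρ₀ hPproj.nonneg) hPρ_le hρ.2
end
end

section
/- If ρ, σ are subnormalized density operators on H, H' ≅ H, and ρ̄ on H ⊗ H' is an extension of ρ (i.e., tr_{H'} ρ̄ = ρ), then there exists an extension σ̄ on H ⊗ H' of σ such that P(ρ̄, σ̄) = P(ρ, σ). -/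
open Matrix Kronecker ComplexOrder

noncomputable section


open scoped Classical
/-!
Write `ρ̄ = √ρ̄ √ρ̄ᴴ` and move the `H'` index of `√ρ̄` to the column side: this gives a factor
`Ψ : H' ⊗ (H ⊗ H') → H` with `Ψ Ψᴴ = tr_{H'} ρ̄ = ρ`, and the same reshaping turns every `N`
with `N Nᴴ = σ̄` into a factor of `tr_{H'} σ̄`. By Uhlmann's theorem (both directions are proved
below through polar decompositions and the bound `Re tr (X C) ≤ ‖X‖₁` for contractions `C`),
some `Φ` with `Φ Φᴴ = σ` has overlap `Re tr (Ψᴴ Φ) = F(ρ, σ)`. Reshaping `Φ` back gives `σ̄`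
with `F(ρ̄, σ̄) ≥ F(ρ, σ)`; the reverse inequality is monotonicity of the fidelity under the
partial trace. The partial trace preserves traces, so the generalized fidelities, hence the
purified distances, agree.
-/

namespace QIT

section SquareRoot

variable {n : Type*} [Fintype n] [DecidableEq n] {A : Matrix n n ℂ}

lemma msqrt_of_posSemidef (hA : A.PosSemidef) : msqrt A =
    (hA.1.eigenvectorUnitary : Matrix n n ℂ) * diagonal ((↑) ∘ Real.sqrt ∘ hA.1.eigenvalues) *
      (star hA.1.eigenvectorUnitary : Matrix n n ℂ) := dif_pos hA

lemma posSemidef_msqrt (hA : A.PosSemidef) : (msqrt A).PosSemidef := by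
  rw [msqrt_of_posSemidef hA]
  exact (posSemidef_diagonal_iff.mpr fun i => by simp).mul_mul_conjTranspose_same _

lemma conjTranspose_msqrt (hA : A.PosSemidef) : (msqrt A)ᴴ = msqrt A :=
  (posSemidef_msqrt hA).1

lemma msqrt_mul_msqrt (hA : A.PosSemidef) : msqrt A * msqrt A = A := by
  conv_rhs => rw [hA.1.spectral_theorem, Unitary.conjStarAlgAut_apply]
  rw [msqrt_of_posSemidef hA]
  set U : Matrix n n ℂ := (hA.1.eigenvectorUnitary : Matrix n n ℂ)
  have hU : star U * U = 1 := Unitary.coe_star_mul_self _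
  calc _ = U * (diagonal ((↑) ∘ Real.sqrt ∘ hA.1.eigenvalues) * (star U * U) *
      diagonal ((↑) ∘ Real.sqrt ∘ hA.1.eigenvalues)) * star U := by simp only [Matrix.mul_assoc]
    _ = _ := by
      rw [hU, Matrix.mul_one, diagonal_mul_diagonal]
      congr 3
      funext i
      simp [← Complex.ofReal_mul, Real.mul_self_sqrt (hA.eigenvalues_nonneg i)]

lemma msqrt_mul_conjTranspose_msqrt (hA : A.PosSemidef) : msqrt A * (msqrt A)ᴴ = A := by
  rw [conjTranspose_msqrt hA, msqrt_mul_msqrt hA]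

end SquareRoot

section Trace

variable {m n : Type*} [Fintype m] [Fintype n]

lemma _root_.Matrix.PosSemidef.re_trace_nonneg {A : Matrix n n ℂ} (hA : A.PosSemidef) :
    0 ≤ A.trace.re :=
  (Complex.nonneg_iff.mp hA.trace_nonneg).1

def flatten (A : Matrix m n ℂ) : EuclideanSpace ℂ (m × n) :=
  WithLp.toLp 2 fun p => A p.1 p.2

lemma trace_conjTranspose_mul_eq_inner (A B : Matrix m n ℂ) :
    (Aᴴ * B).trace = inner ℂ (flatten A) (flatten B) := by
  simp only [Matrix.trace, diag, mul_apply, conjTranspose_apply, PiLp.inner_apply,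
    RCLike.inner_apply', flatten, Fintype.sum_prod_type]
  exact Finset.sum_comm

lemma re_trace_conjTranspose_mul_le (A B : Matrix m n ℂ) :
    (Aᴴ * B).trace.re ≤ √(Aᴴ * A).trace.re * √(Bᴴ * B).trace.re := by
  simp only [trace_conjTranspose_mul_eq_inner]
  refine (Complex.re_le_norm _).trans ((norm_inner_le_norm _ _).trans_eq ?_)
  rw [norm_eq_sqrt_re_inner (𝕜 := ℂ), norm_eq_sqrt_re_inner (𝕜 := ℂ)]
  rfl

end Trace

lemma _root_.Orthonormal.exists_orthonormal_eqOn_of_card_le {𝕜 E ι : Type*} [RCLike 𝕜]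
    [NormedAddCommGroup E] [InnerProductSpace 𝕜 E] [FiniteDimensional 𝕜 E] [Fintype ι]
    (hcard : Fintype.card ι ≤ Module.finrank 𝕜 E) {S : Set ι} {u : ι → E}
    (hu : Orthonormal 𝕜 (S.domRestrict u)) : ∃ w : ι → E, Orthonormal 𝕜 w ∧ S.EqOn w u := by
  obtain ⟨e⟩ : Nonempty (ι ↪ Fin (Module.finrank 𝕜 E)) :=
    Function.Embedding.nonempty_of_card_le (by simpa using hcard)
  set v := Function.extend e u 0
  have hve : ∀ i, v (e i) = u i := e.injective.extend_apply u 0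
  have hv : Orthonormal 𝕜 ((e '' S).domRestrict v) := by
    have hcomp : (e '' S).domRestrict v =
        S.domRestrict u ∘ (Equiv.Set.image e S e.injective).symm := by
      funext ⟨j, hj⟩
      obtain ⟨i, hi, rfl⟩ := hj
      simp [Equiv.Set.image_symm_apply e S e.injective i (Set.mem_image_of_mem e hi), hve]
    rw [hcomp]
    exact hu.comp _ (Equiv.injective _)
  obtain ⟨b, hb⟩ := hv.exists_orthonormalBasis_extension_of_card_eq (Fintype.card_fin _).symm
  exact ⟨b ∘ e, b.orthonormal.comp e e.injective, fun i hi => by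
    simp [hb (e i) ⟨i, hi, rfl⟩, hve]⟩

section Polar

variable {m n : Type*} [Fintype m]

def euclideanCol (M : Matrix m n ℂ) (i : n) : EuclideanSpace ℂ m :=
  WithLp.toLp 2 fun a => M a i

lemma conjTranspose_mul_apply_eq_inner (M N : Matrix m n ℂ) (i j : n) :
    (Mᴴ * N) i j = inner ℂ (euclideanCol M i) (euclideanCol N j) := by
  simp [euclideanCol, PiLp.inner_apply, mul_apply, mul_comm]

variable [Fintype n] [DecidableEq n]

lemma exists_isometry_mul_diagonal_sqrt_eq (hmn : Fintype.card n ≤ Fintype.card m)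
    {M : Matrix m n ℂ} {d : n → ℝ} (hd : ∀ i, 0 ≤ d i) (hM : Mᴴ * M = diagonal ((↑) ∘ d)) :
    ∃ F : Matrix m n ℂ, Fᴴ * F = 1 ∧ F * (diagonal ((↑) ∘ Real.sqrt ∘ d) : Matrix n n ℂ) = M := by
  have hcol : ∀ i j, inner ℂ (euclideanCol M i) (euclideanCol M j) =
      if i = j then (d i : ℂ) else 0 := by
    intro i j
    rw [← conjTranspose_mul_apply_eq_inner, hM, diagonal_apply]
    rfl
  have hzero : ∀ i, d i = 0 → euclideanCol M i = 0 := fun i hi =>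
    inner_self_eq_zero.mp (by rw [hcol]; simp [hi])
  set u : n → EuclideanSpace ℂ m := fun i => ((√(d i) : ℂ))⁻¹ • euclideanCol M i
  have hu : Orthonormal ℂ ({i | d i ≠ 0}.domRestrict u) := by
    rw [orthonormal_iff_ite]
    rintro ⟨i, hi⟩ ⟨j, -⟩
    simp only [Set.domRestrict_apply, Subtype.mk.injEq, u, inner_smul_left, inner_smul_right, hcol]
    split_ifs with hij
    · subst hij
      have hsqrt : (√(d i) : ℂ) ≠ 0 := by simpa [Real.sqrt_eq_zero (hd i)] using hi
      have hdi : (d i : ℂ) = (√(d i) : ℂ) ^ 2 := by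
        rw [← Complex.ofReal_pow, Real.sq_sqrt (hd i)]
      rw [map_inv₀, Complex.conj_ofReal, hdi]
      field_simp
    · simp
  obtain ⟨w, hw, hwu⟩ := hu.exists_orthonormal_eqOn_of_card_le (by simpa using hmn)
  refine ⟨of fun a i => w i a, ?_, ?_⟩
  · ext i j
    rw [conjTranspose_mul_apply_eq_inner, one_apply]
    exact orthonormal_iff_ite.mp hw i j
  · ext a i
    rw [mul_diagonal]
    by_cases hi : d i = 0
    · have : M a i = euclideanCol M i a := rfl
      simp [hi, this, hzero i hi]
    · have hsqrt : (√(d i) : ℂ) ≠ 0 := by simpa [Real.sqrt_eq_zero (hd i)] using hi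
      simp only [of_apply, hwu hi, u, Function.comp_apply]
      change (√(d i) : ℂ)⁻¹ * M a i * √(d i) = M a i
      field_simp

lemma exists_isometry_mul_msqrt_eq (hmn : Fintype.card n ≤ Fintype.card m) (T : Matrix m n ℂ) :
    ∃ J : Matrix m n ℂ, Jᴴ * J = 1 ∧ J * msqrt (Tᴴ * T) = T := by
  have hQ : (Tᴴ * T).PosSemidef := posSemidef_conjTranspose_mul_self T
  set V : Matrix n n ℂ := (hQ.1.eigenvectorUnitary : Matrix n n ℂ)
  have hVV : Vᴴ * V = 1 := Unitary.coe_star_mul_self _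
  have hVV' : V * Vᴴ = 1 := Unitary.coe_mul_star_self _
  have hdiag : (T * V)ᴴ * (T * V) = diagonal ((↑) ∘ hQ.1.eigenvalues) := by
    have := hQ.1.conjStarAlgAut_star_eigenvectorUnitary
    rw [Unitary.conjStarAlgAut_star_apply] at this
    rw [conjTranspose_mul]
    calc _ = star V * (Tᴴ * T) * V := by simp only [Matrix.mul_assoc, star_eq_conjTranspose]
      _ = _ := this
  obtain ⟨F, hFF, hFT⟩ := exists_isometry_mul_diagonal_sqrt_eq hmn hQ.eigenvalues_nonneg hdiag
  refine ⟨F * Vᴴ, ?_, ?_⟩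
  · rw [conjTranspose_mul, conjTranspose_conjTranspose, Matrix.mul_assoc, ← Matrix.mul_assoc Fᴴ,
      hFF, Matrix.one_mul, hVV']
  · rw [msqrt_of_posSemidef hQ, show (star hQ.1.eigenvectorUnitary : Matrix n n ℂ) = Vᴴ from rfl]
    simp only [Matrix.mul_assoc]
    rw [← Matrix.mul_assoc Vᴴ V, hVV, Matrix.one_mul, ← Matrix.mul_assoc, hFT, Matrix.mul_assoc,
      hVV', Matrix.mul_one]

end Polar

section Fidelity

variable {m n : Type*} [Fintype m] [Fintype n] [DecidableEq n]

lemma posSemidef_one_sub_mul_conjTranspose_of_isometry [DecidableEq m] {J : Matrix m n ℂ}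
    (hJ : Jᴴ * J = 1) : (1 - J * Jᴴ).PosSemidef := by
  have hidem : (1 - J * Jᴴ)ᴴ * (1 - J * Jᴴ) = 1 - J * Jᴴ := by
    have : J * Jᴴ * (J * Jᴴ) = J * Jᴴ := by
      rw [Matrix.mul_assoc, ← Matrix.mul_assoc Jᴴ, hJ, Matrix.one_mul]
    simp only [conjTranspose_sub, conjTranspose_one, conjTranspose_mul,
      conjTranspose_conjTranspose, Matrix.sub_mul, Matrix.mul_sub, Matrix.one_mul,
      Matrix.mul_one, this, sub_self, sub_zero]
  rw [← hidem]
  exact posSemidef_conjTranspose_mul_self _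

lemma re_trace_mul_mul_conjTranspose_le {C : Matrix n n ℂ}
    (hC : (1 - C * Cᴴ).PosSemidef) (R : Matrix m n ℂ) :
    (R * C * (R * C)ᴴ).trace.re ≤ (R * Rᴴ).trace.re := by
  have h := (hC.mul_mul_conjTranspose_same R).re_trace_nonneg
  rw [Matrix.mul_sub, Matrix.sub_mul, Matrix.mul_one, trace_sub, Complex.sub_re] at h
  simp only [conjTranspose_mul, Matrix.mul_assoc] at h ⊢
  linarith

lemma re_trace_mul_le_traceNorm (X : Matrix n n ℂ) {C : Matrix n n ℂ}
    (hC : (1 - C * Cᴴ).PosSemidef) : (X * C).trace.re ≤ traceNorm X := by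
  obtain ⟨J, hJ, hJX⟩ := exists_isometry_mul_msqrt_eq le_rfl X
  set P := msqrt (Xᴴ * X)
  have hP : P.PosSemidef := posSemidef_msqrt (posSemidef_conjTranspose_mul_self X)
  set R := msqrt P
  have hRR : R * R = P := msqrt_mul_msqrt hP
  have hRH : Rᴴ = R := conjTranspose_msqrt hP
  -- polar decomposition `X = J P`, `P = R²`: apply Cauchy–Schwarz to `X C = (R Jᴴ)ᴴ (R C)`
  have hXC : X * C = (R * Jᴴ)ᴴ * (R * C) := by
    rw [conjTranspose_mul, conjTranspose_conjTranspose, hRH, ← hJX, ← hRR]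
    simp only [Matrix.mul_assoc]
  have hleft : ((R * Jᴴ)ᴴ * (R * Jᴴ)).trace = P.trace := by
    rw [conjTranspose_mul, conjTranspose_conjTranspose, hRH, Matrix.mul_assoc,
      trace_mul_comm, Matrix.mul_assoc, Matrix.mul_assoc, hJ, Matrix.mul_one, hRR]
  have hright : ((R * C)ᴴ * (R * C)).trace.re ≤ P.trace.re := by
    have h := re_trace_mul_mul_conjTranspose_le hC R
    rwa [hRH, hRR, ← trace_mul_comm] at h
  calc (X * C).trace.re
      ≤ √((R * Jᴴ)ᴴ * (R * Jᴴ)).trace.re * √((R * C)ᴴ * (R * C)).trace.re := by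
        rw [hXC]; exact re_trace_conjTranspose_mul_le _ _
    _ ≤ √P.trace.re * √P.trace.re := by
        rw [hleft]; gcongr
    _ = traceNorm X := Real.mul_self_sqrt hP.re_trace_nonneg

lemma exists_unitary_re_trace_mul_eq_traceNorm (A : Matrix n n ℂ) :
    ∃ U : Matrix n n ℂ, U * Uᴴ = 1 ∧ (A * U).trace.re = traceNorm A := by
  obtain ⟨J, hJ, hJA⟩ := exists_isometry_mul_msqrt_eq le_rfl A
  refine ⟨Jᴴ, by rwa [conjTranspose_conjTranspose], ?_⟩
  conv_lhs => rw [← hJA, Matrix.mul_assoc, trace_mul_comm, Matrix.mul_assoc, hJ, Matrix.mul_one]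
  rfl

lemma re_trace_conjTranspose_mul_le_fidelity_of_card_le
    (hnm : Fintype.card n ≤ Fintype.card m) (M N : Matrix n m ℂ) :
    (Mᴴ * N).trace.re ≤ fidelity (M * Mᴴ) (N * Nᴴ) := by
  obtain ⟨J, hJ, hJM⟩ := exists_isometry_mul_msqrt_eq hnm Mᴴ
  obtain ⟨K, hK, hKN⟩ := exists_isometry_mul_msqrt_eq hnm Nᴴ
  rw [conjTranspose_conjTranspose] at hJM hKN
  have hN : N = msqrt (N * Nᴴ) * Kᴴ := by
    rw [← conjTranspose_msqrt (posSemidef_self_mul_conjTranspose N), ← conjTranspose_mul, hKN,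
      conjTranspose_conjTranspose]
  have hC : (1 - Kᴴ * J * (Kᴴ * J)ᴴ).PosSemidef := by
    have h := (posSemidef_one_sub_mul_conjTranspose_of_isometry hJ).conjTranspose_mul_mul_same K
    rw [Matrix.mul_sub, Matrix.sub_mul, Matrix.mul_one, hK] at h
    simpa only [conjTranspose_mul, conjTranspose_conjTranspose, Matrix.mul_assoc] using h
  have htrace : (Mᴴ * N).trace = (msqrt (M * Mᴴ) * msqrt (N * Nᴴ) * (Kᴴ * J)).trace := by
    conv_lhs => rw [← hJM, hN, Matrix.mul_assoc, trace_mul_comm]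
    simp only [Matrix.mul_assoc]
  rw [htrace]
  exact re_trace_mul_le_traceNorm _ hC

lemma re_trace_conjTranspose_mul_le_fidelity (M N : Matrix n m ℂ) :
    (Mᴴ * N).trace.re ≤ fidelity (M * Mᴴ) (N * Nᴴ) := by
  -- pad with zero columns so that the isometries of the polar decompositions exist
  let pad (X : Matrix n m ℂ) : Matrix n (m ⊕ n) ℂ := fromCols X 0
  have hpad (X Y : Matrix n m ℂ) : pad X * (pad Y)ᴴ = X * Yᴴ := by
    simp [pad, conjTranspose_fromCols_eq_fromRows_conjTranspose, fromCols_mul_fromRows]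
  have h := re_trace_conjTranspose_mul_le_fidelity_of_card_le (m := m ⊕ n)
    (by simp [Fintype.card_sum]) (pad M) (pad N)
  rwa [hpad, hpad, trace_mul_comm, hpad, ← trace_mul_comm] at h

lemma exists_mul_conjTranspose_eq_re_trace_eq_fidelity
    (hnm : Fintype.card n ≤ Fintype.card m) (M : Matrix n m ℂ) {σ : Matrix n n ℂ}
    (hσ : σ.PosSemidef) :
    ∃ N : Matrix n m ℂ, N * Nᴴ = σ ∧ (Mᴴ * N).trace.re = fidelity (M * Mᴴ) σ := by
  obtain ⟨J, hJ, hJM⟩ := exists_isometry_mul_msqrt_eq hnm Mᴴ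
  rw [conjTranspose_conjTranspose] at hJM
  obtain ⟨U, hU, hUtr⟩ :=
    exists_unitary_re_trace_mul_eq_traceNorm (msqrt (M * Mᴴ) * msqrt σ)
  refine ⟨msqrt σ * U * Jᴴ, ?_, ?_⟩
  · calc msqrt σ * U * Jᴴ * (msqrt σ * U * Jᴴ)ᴴ = msqrt σ * U * (Jᴴ * J) * Uᴴ * (msqrt σ)ᴴ := by
          simp only [conjTranspose_mul, conjTranspose_conjTranspose, Matrix.mul_assoc]
      _ = σ := by
          rw [hJ, Matrix.mul_one, Matrix.mul_assoc _ U, hU, Matrix.mul_one,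
            msqrt_mul_conjTranspose_msqrt hσ]
  · conv_lhs => rw [← hJM, Matrix.mul_assoc, trace_mul_comm]
    simp only [Matrix.mul_assoc] at hUtr ⊢
    rw [hJ, Matrix.mul_one, hUtr]
    rfl

end Fidelity

section PartialTrace

variable {a b c : Type*} [Fintype a] [Fintype b] [Fintype c]

def reshapeRight (M : Matrix (a × b) c ℂ) : Matrix a (b × c) ℂ :=
  of fun i jk => M (i, jk.1) jk.2

omit [Fintype a] [Fintype b] [Fintype c] in
lemma reshapeRight_surjective :
    Function.Surjective (reshapeRight : Matrix (a × b) c ℂ → Matrix a (b × c) ℂ) :=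
  fun X => ⟨of fun ij k => X ij.1 (ij.2, k), rfl⟩

lemma ptraceRight_mul_conjTranspose (M N : Matrix (a × b) c ℂ) :
    ptraceRight (M * Nᴴ) = reshapeRight M * (reshapeRight N)ᴴ := by
  ext i j
  simp [ptraceRight, reshapeRight, mul_apply, Fintype.sum_prod_type]

lemma trace_conjTranspose_reshapeRight_mul (M N : Matrix (a × b) c ℂ) :
    ((reshapeRight M)ᴴ * reshapeRight N).trace = (Mᴴ * N).trace := by
  simp only [trace_conjTranspose_mul_eq_inner, PiLp.inner_apply, flatten, reshapeRight]
  exact Fintype.sum_equiv (Equiv.prodAssoc a b c).symm _ _ fun _ => rfl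

lemma trace_ptraceRight (M : Matrix (a × b) (a × b) ℂ) : (ptraceRight M).trace = M.trace := by
  simp [ptraceRight, Matrix.trace, Fintype.sum_prod_type]

variable [DecidableEq a] [DecidableEq b]

lemma fidelity_le_fidelity_ptraceRight {ρ σ : Matrix (a × b) (a × b) ℂ} (hρ : ρ.PosSemidef)
    (hσ : σ.PosSemidef) : fidelity ρ σ ≤ fidelity (ptraceRight ρ) (ptraceRight σ) := by
  obtain ⟨N, hN, hfid⟩ := exists_mul_conjTranspose_eq_re_trace_eq_fidelity le_rfl (msqrt ρ) hσ
  rw [msqrt_mul_conjTranspose_msqrt hρ] at hfid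
  calc fidelity ρ σ = ((reshapeRight (msqrt ρ))ᴴ * reshapeRight N).trace.re := by
        rw [trace_conjTranspose_reshapeRight_mul, hfid]
    _ ≤ _ := re_trace_conjTranspose_mul_le_fidelity _ _
    _ = _ := by
        rw [← ptraceRight_mul_conjTranspose, ← ptraceRight_mul_conjTranspose,
          msqrt_mul_conjTranspose_msqrt hρ, hN]

lemma exists_ptraceRight_eq_fidelity_eq (hab : Fintype.card a ≤ Fintype.card b)
    {ρbar : Matrix (a × b) (a × b) ℂ} (hρ : ρbar.PosSemidef) {σ : Matrix a a ℂ}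
    (hσ : σ.PosSemidef) :
    ∃ σbar : Matrix (a × b) (a × b) ℂ, σbar.PosSemidef ∧ ptraceRight σbar = σ ∧
      fidelity ρbar σbar = fidelity (ptraceRight ρbar) σ := by
  have hcard : Fintype.card a ≤ Fintype.card (b × (a × b)) := by
    rcases (Fintype.card a).eq_zero_or_pos with h0 | h0
    · simp [h0]
    · rw [Fintype.card_prod, Fintype.card_prod]
      exact hab.trans (Nat.le_mul_of_pos_right _ (Nat.mul_pos h0 (h0.trans_le hab)))
  set Ψ := reshapeRight (msqrt ρbar)
  have hΨ : Ψ * Ψᴴ = ptraceRight ρbar := by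
    rw [← ptraceRight_mul_conjTranspose, msqrt_mul_conjTranspose_msqrt hρ]
  obtain ⟨Φ, hΦ, hfid⟩ := exists_mul_conjTranspose_eq_re_trace_eq_fidelity hcard Ψ hσ
  obtain ⟨N, rfl⟩ := reshapeRight_surjective Φ
  have hptr : ptraceRight (N * Nᴴ) = σ := by rw [ptraceRight_mul_conjTranspose, hΦ]
  have hNN := posSemidef_self_mul_conjTranspose N
  refine ⟨N * Nᴴ, hNN, hptr, le_antisymm ?_ ?_⟩
  · simpa only [hptr] using fidelity_le_fidelity_ptraceRight hρ hNN
  · calc fidelity (ptraceRight ρbar) σ = ((msqrt ρbar)ᴴ * N).trace.re := by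
          rw [← hΨ, ← hfid, trace_conjTranspose_reshapeRight_mul]
      _ ≤ fidelity (msqrt ρbar * (msqrt ρbar)ᴴ) (N * Nᴴ) :=
          re_trace_conjTranspose_mul_le_fidelity _ _
      _ = fidelity ρbar (N * Nᴴ) := by rw [msqrt_mul_conjTranspose_msqrt hρ]

end PartialTrace

end QIT

open QIT in
theorem stmt6_general {h : Type*} [Fintype h] [DecidableEq h]
    (ρ σ : Matrix h h ℂ) (hσ : SubNormalized σ)
    (ρbar : Matrix (h × h) (h × h) ℂ) (hbar : ρbar.PosSemidef)
    (hext : ptraceRight ρbar = ρ) :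
    ∃ σbar : Matrix (h × h) (h × h) ℂ, σbar.PosSemidef ∧ ptraceRight σbar = σ ∧
      pDist ρbar σbar = pDist ρ σ := by
  obtain ⟨σbar, hσbar, hptr, hfid⟩ := exists_ptraceRight_eq_fidelity_eq le_rfl hbar hσ.1
  refine ⟨σbar, hσbar, hptr, ?_⟩
  rw [pDist, pDist, gFid, gFid, hfid, ← trace_ptraceRight ρbar, ← trace_ptraceRight σbar, hext,
    hptr]

open QIT in
/-- Extensions matching the purified distance. -/
theorem stmt6 {h : Type*} [Fintype h] [DecidableEq h]
    (ρ σ : Matrix h h ℂ) (hρ : SubNormalized ρ) (hσ : SubNormalized σ)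
    (ρbar : Matrix (h × h) (h × h) ℂ) (hbar : ρbar.PosSemidef)
    (hext : ptraceRight ρbar = ρ) :
    ∃ σbar : Matrix (h × h) (h × h) ℂ, σbar.PosSemidef ∧ ptraceRight σbar = σ ∧
      pDist ρbar σbar = pDist ρ σ :=
  stmt6_general ρ σ hσ ρbar hbar hext
end
end
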